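/- arXiv:math/9909151 — 4 statements merged into one kernel-verified Lean document; each statement's English description precedes it below -/
import Mathlib

section
/- With A(e^h) as the Alexander power series of the (m,p)-torus knot, the coefficient of h^2 in ln A(e^h) equals (m^2 - 1)(p^2 - 1)/24. -/
open PowerSeries Finset

/-- The formal power series sinh(x/2)/(x/2) = ∑ (x/2)^(2k)/(2k+1)! over ℚ. -/
noncomputable def shc : PowerSeries ℚ :=
  PowerSeries.mk fun k => if Even k then ((2 : ℚ) ^ k * (Nat.factorial (k + 1) : ℚ))⁻¹ else 0

/-- Formal logarithm: coefficientwise ∑_{k≥1} (-1)^(k+1)/k (F-1)^k. -/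
noncomputable def plog (F : PowerSeries ℚ) : PowerSeries ℚ :=
  PowerSeries.mk fun n =>
    ∑ k ∈ Finset.Icc 1 n, ((-1 : ℚ) ^ (k + 1) / (k : ℚ)) * PowerSeries.coeff n ((F - 1) ^ k)

/-- The modified Bernoulli numbers: b_{2n} is the coefficient of x^(2n) in
(1/2)·ln(sinh(x/2)/(x/2)). -/
noncomputable def modB (n : ℕ) : ℚ := (1 / 2) * PowerSeries.coeff (2 * n) (plog shc)

/-- The Alexander power series of the (m,p)-torus knot:
A(e^h) = (2sinh(mph/2))(2sinh(h/2))/((2sinh(mh/2))(2sinh(ph/2)))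
       = f(mph)·f(h)/(f(mh)·f(ph)) where f = shc. -/
noncomputable def Aser (m p : ℤ) : PowerSeries ℚ :=
  (PowerSeries.rescale ((m * p : ℤ) : ℚ) shc * shc) *
    (PowerSeries.rescale (m : ℚ) shc * PowerSeries.rescale (p : ℚ) shc)⁻¹

lemma shc0 : PowerSeries.coeff 0 shc = 1 := by
  simp [shc, Nat.factorial]

lemma shc1 : PowerSeries.coeff 1 shc = 0 := by
  simp [shc]

lemma shc2 : PowerSeries.coeff 2 shc = 1/24 := by
  simp [shc, Nat.factorial]
  norm_num

lemma r0 (c : ℚ) : PowerSeries.coeff 0 (PowerSeries.rescale c shc) = 1 := by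
  simp [coeff_rescale, shc0]

lemma r1 (c : ℚ) : PowerSeries.coeff 1 (PowerSeries.rescale c shc) = 0 := by
  simp [coeff_rescale, shc1]

lemma r2 (c : ℚ) : PowerSeries.coeff 2 (PowerSeries.rescale c shc) = c^2/24 := by
  simp [coeff_rescale, shc2]; ring

-- coefficients of product of two series with coeffs (1,0,a) and (1,0,b)
lemma mul0 (f g : PowerSeries ℚ) (hf : PowerSeries.coeff 0 f = 1)
    (hg : PowerSeries.coeff 0 g = 1) : PowerSeries.coeff 0 (f*g) = 1 := by
  simp [coeff_mul, hf, hg]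

lemma mul1 (f g : PowerSeries ℚ) (hf : PowerSeries.coeff 1 f = 0)
    (hg : PowerSeries.coeff 1 g = 0) : PowerSeries.coeff 1 (f*g) = 0 := by
  rw [coeff_mul, Finset.Nat.sum_antidiagonal_eq_sum_range_succ_mk]
  simp [Finset.sum_range_succ, hf, hg]

lemma mul2 (f g : PowerSeries ℚ) (hf0 : PowerSeries.coeff 0 f = 1)
    (hg0 : PowerSeries.coeff 0 g = 1) (hf1 : PowerSeries.coeff 1 f = 0)
    (hg1 : PowerSeries.coeff 1 g = 0) :
    PowerSeries.coeff 2 (f*g) = PowerSeries.coeff 2 f + PowerSeries.coeff 2 g := by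
  rw [coeff_mul, Finset.Nat.sum_antidiagonal_eq_sum_range_succ_mk]
  simp [Finset.sum_range_succ, hf0, hg0, hf1, hg1]; ring

theorem log_torus_alexander_coeff_two (m p : ℤ) (hm : m ≠ 0) (hp : p ≠ 0) :
    PowerSeries.coeff 2 (plog (Aser m p)) = ((m : ℚ) ^ 2 - 1) * ((p : ℚ) ^ 2 - 1) / 24 := by
  set H := PowerSeries.rescale (m : ℚ) shc * PowerSeries.rescale (p : ℚ) shc with hH
  have hH0 : PowerSeries.coeff 0 H = 1 := mul0 _ _ (r0 _) (r0 _)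
  have hH1 : PowerSeries.coeff 1 H = 0 := mul1 _ _ (r1 _) (r1 _)
  have hH2 : PowerSeries.coeff 2 H = ((m:ℚ)^2 + (p:ℚ)^2)/24 := by
    rw [mul2 _ _ (r0 _) (r0 _) (r1 _) (r1 _), r2, r2]; ring
  have hHc : PowerSeries.constantCoeff H = 1 := by
    rw [← coeff_zero_eq_constantCoeff_apply]; exact hH0
  have hI0 : PowerSeries.coeff 0 H⁻¹ = 1 := by
    rw [coeff_inv]; simp [hHc]
  have hI1 : PowerSeries.coeff 1 H⁻¹ = 0 := by
    rw [coeff_inv, if_neg one_ne_zero, Finset.Nat.sum_antidiagonal_eq_sum_range_succ_mk]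
    simp [Finset.sum_range_succ, hHc, hH1]
  have hI2 : PowerSeries.coeff 2 H⁻¹ = -(((m:ℚ)^2 + (p:ℚ)^2)/24) := by
    rw [coeff_inv, if_neg two_ne_zero, Finset.Nat.sum_antidiagonal_eq_sum_range_succ_mk]
    simp [Finset.sum_range_succ, hHc, hH1, hH2, hI0, hI1]
  set G := PowerSeries.rescale ((m * p : ℤ) : ℚ) shc * shc with hG
  have hG0 : PowerSeries.coeff 0 G = 1 := mul0 _ _ (r0 _) shc0
  have hG1 : PowerSeries.coeff 1 G = 0 := mul1 _ _ (r1 _) shc1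
  have hG2 : PowerSeries.coeff 2 G = ((m:ℚ)^2*(p:ℚ)^2 + 1)/24 := by
    rw [mul2 _ _ (r0 _) shc0 (r1 _) shc1, r2, shc2]; push_cast; ring
  have hF0 : PowerSeries.coeff 0 (Aser m p) = 1 := mul0 _ _ hG0 hI0
  have hF1 : PowerSeries.coeff 1 (Aser m p) = 0 := mul1 _ _ hG1 hI1
  have hF2 : PowerSeries.coeff 2 (Aser m p) =
      ((m:ℚ)^2 - 1) * ((p:ℚ)^2 - 1)/24 := by
    rw [show Aser m p = G * H⁻¹ from rfl, mul2 _ _ hG0 hI0 hG1 hI1, hG2, hI2]; ring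
  -- now compute plog coefficient
  have hc : PowerSeries.constantCoeff (Aser m p) = 1 := by
    rw [← coeff_zero_eq_constantCoeff_apply]; exact hF0
  have ha0 : PowerSeries.coeff 0 (Aser m p - 1) = 0 := by simp [hc]
  have ha1 : PowerSeries.coeff 1 (Aser m p - 1) = 0 := by simp [hF1]
  have hsq : PowerSeries.coeff 2 ((Aser m p - 1)^2) = 0 := by
    rw [sq, coeff_mul, Finset.Nat.sum_antidiagonal_eq_sum_range_succ_mk]
    simp [Finset.sum_range_succ, hc, hF1]
  rw [plog, coeff_mk, show Finset.Icc 1 2 = {1, 2} from rfl]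
  rw [Finset.sum_insert (by decide), Finset.sum_singleton]
  simp [hsq, hF2]
end

section
/- With A(e^h) as the Alexander power series of the (m,p)-torus knot, the coefficient of h^4 in ln A(e^h) equals -(m^4 - 1)(p^4 - 1)/2880. -/
open PowerSeries Finset

lemma coeff_mul_range (f g : PowerSeries ℚ) (n : ℕ) :
    PowerSeries.coeff n (f * g)
      = ∑ i ∈ Finset.range (n+1), PowerSeries.coeff i f * PowerSeries.coeff (n-i) g := by
  rw [PowerSeries.coeff_mul, Finset.Nat.sum_antidiagonal_eq_sum_range_succ_mk]

lemma shc3 : PowerSeries.coeff 3 shc = 0 := by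
  rw [shc, PowerSeries.coeff_mk, if_neg (by decide)]
lemma shc4 : PowerSeries.coeff 4 shc = 1/1920 := by
  rw [shc, PowerSeries.coeff_mk, if_pos (by decide)]; norm_num [Nat.factorial]

theorem log_torus_alexander_coeff_four (m p : ℤ) (hm : m ≠ 0) (hp : p ≠ 0) :
    PowerSeries.coeff 4 (plog (Aser m p)) =
      -(((m : ℚ) ^ 4 - 1) * ((p : ℚ) ^ 4 - 1)) / 2880 := by
  set G : PowerSeries ℚ := PowerSeries.rescale (m : ℚ) shc * PowerSeries.rescale (p : ℚ) shc
    with hGdef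
  set N : PowerSeries ℚ := PowerSeries.rescale ((m * p : ℤ) : ℚ) shc * shc with hNdef
  have hG0 : PowerSeries.constantCoeff G ≠ 0 := by
    have : PowerSeries.constantCoeff G = 1 := by
      rw [hGdef, map_mul]
      simp [← PowerSeries.coeff_zero_eq_constantCoeff, PowerSeries.coeff_rescale, shc0]
    rw [this]; norm_num
  set F := Aser m p with hF
  have key : F * G = N := by
    rw [hF, Aser, ← hGdef, ← hNdef, mul_assoc, PowerSeries.inv_mul_cancel G hG0, mul_one]
  have push := fun n => congrArg (PowerSeries.coeff n) key
  have e0 := push 0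
  have e1 := push 1
  have e2 := push 2
  have e3 := push 3
  have e4 := push 4
  clear push key
  simp only [hGdef, hNdef, coeff_mul_range, Int.cast_mul] at e0 e1 e2 e3 e4
  norm_num [Finset.sum_range_succ, PowerSeries.coeff_rescale] at e0 e1 e2 e3 e4
  simp only [← PowerSeries.coeff_zero_eq_constantCoeff_apply] at e0 e1 e2 e3 e4
  simp only [shc0, shc1, shc2, shc3, shc4] at e0 e1 e2 e3 e4
  set a0 := PowerSeries.coeff 0 F with ha0
  set a1 := PowerSeries.coeff 1 F with ha1
  set a2 := PowerSeries.coeff 2 F with ha2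
  set a3 := PowerSeries.coeff 3 F with ha3
  set a4 := PowerSeries.coeff 4 F with ha4
  have h0 : a0 = 1 := by linear_combination e0
  rw [h0] at e1 e2 e3 e4
  have h1 : a1 = 0 := by linear_combination e1
  rw [h1] at e2 e3 e4
  have h2 : a2 = ((m : ℚ)^2 - 1) * ((p : ℚ)^2 - 1) / 24 := by linear_combination e2
  rw [h2] at e3 e4
  have h3 : a3 = 0 := by linear_combination e3
  rw [h3] at e4
  have h4 : a4 = ((m : ℚ)^4 - 1) * ((p : ℚ)^4 - 1) / 1920
      - ((m : ℚ)^2 - 1) * ((p : ℚ)^2 - 1) * ((m : ℚ)^2 + (p : ℚ)^2) / 576 := by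
    linear_combination e4
  -- now compute the plog coefficient
  set D : PowerSeries ℚ := F - 1 with hD
  have hd0 : PowerSeries.coeff 0 D = 0 := by
    rw [hD, map_sub, PowerSeries.coeff_one, if_pos rfl, ← ha0, h0]; ring
  have hd1 : PowerSeries.coeff 1 D = 0 := by
    rw [hD, map_sub, PowerSeries.coeff_one, if_neg (by norm_num), ← ha1, h1]; ring
  have hd2 : PowerSeries.coeff 2 D = a2 := by
    rw [hD, map_sub, PowerSeries.coeff_one, if_neg (by norm_num), ← ha2]; ring
  have hd3 : PowerSeries.coeff 3 D = 0 := by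
    rw [hD, map_sub, PowerSeries.coeff_one, if_neg (by norm_num), ← ha3, h3]; ring
  have hd4 : PowerSeries.coeff 4 D = a4 := by
    rw [hD, map_sub, PowerSeries.coeff_one, if_neg (by norm_num), ← ha4]; ring
  have hdvd : (PowerSeries.X : PowerSeries ℚ)^2 ∣ D := by
    rw [PowerSeries.X_pow_dvd_iff]
    intro i hi
    interval_cases i
    · exact hd0
    · exact hd1
  have q3 : PowerSeries.coeff 4 (D ^ 3) = 0 := by
    have : (PowerSeries.X : PowerSeries ℚ)^6 ∣ D^3 := by
      have := pow_dvd_pow_of_dvd hdvd 3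
      rwa [← pow_mul] at this
    rw [PowerSeries.X_pow_dvd_iff] at this
    exact this 4 (by norm_num)
  have q4 : PowerSeries.coeff 4 (D ^ 4) = 0 := by
    have : (PowerSeries.X : PowerSeries ℚ)^8 ∣ D^4 := by
      have := pow_dvd_pow_of_dvd hdvd 4
      rwa [← pow_mul] at this
    rw [PowerSeries.X_pow_dvd_iff] at this
    exact this 4 (by norm_num)
  have q2 : PowerSeries.coeff 4 (D ^ 2) = a2 ^ 2 := by
    rw [pow_two, coeff_mul_range]
    simp [Finset.sum_range_succ, hd0, hd1, hd2, hd3, hd4]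
    ring
  have q1 : PowerSeries.coeff 4 (D ^ 1) = a4 := by rw [pow_one]; exact hd4
  have hIcc : Finset.Icc 1 4 = ({1, 2, 3, 4} : Finset ℕ) := by decide
  rw [plog, PowerSeries.coeff_mk, hIcc]
  rw [show ((Aser m p - 1 : PowerSeries ℚ)) = D by rw [hD, hF]]
  rw [Finset.sum_insert (by decide), Finset.sum_insert (by decide),
    Finset.sum_insert (by decide), Finset.sum_singleton]
  rw [q1, q2, q3, q4, h2, h4]
  push_cast
  ring
end

section
/- In a commutative Hopf algebra H over ℚ that is graded, connected, of finite type, if g is a group-like element (Δg = g ⊗ g, ε(g) = 1) whose degree-zero component is 1, then g = exp(x) for a unique primitive element x (an element with Δx = x⊗1 + 1⊗x), where exp is taken in the completion of H with respect to the grading filtration. -/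
open TensorProduct

set_option linter.unusedSectionVars false
set_option linter.unusedVariables false
set_option maxHeartbeats 1000000

namespace ExpLogAux

open PowerSeries Finset

variable {R : Type} [CommRing R] [Algebra ℚ R]

noncomputable def pexp (F : R⟦X⟧) : R⟦X⟧ :=
  PowerSeries.mk fun n => coeff n (∑ k ∈ range (n+1), ((k.factorial : ℚ))⁻¹ • F ^ k)

noncomputable def plog (F : R⟦X⟧) : R⟦X⟧ :=
  PowerSeries.mk fun n => coeff n
    (∑ k ∈ Finset.Icc 1 n, (((-1 : ℚ)) ^ (k+1) / k) • (F - 1) ^ k)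

lemma coeff_mul_eq_zero_left {E W : R⟦X⟧} {n : ℕ} (h : ∀ i ≤ n, coeff i E = 0) :
    coeff n (E * W) = 0 := by
  rw [coeff_mul]
  refine Finset.sum_eq_zero fun p hp => ?_
  rw [Finset.HasAntidiagonal.mem_antidiagonal] at hp
  rw [h p.1 (by omega), zero_mul]

lemma coeff_mul_congr_right {P Q Q' : R⟦X⟧} {n : ℕ}
    (h : ∀ i ≤ n, coeff i Q = coeff i Q') :
    coeff n (P * Q) = coeff n (P * Q') := by
  rw [coeff_mul, coeff_mul]
  refine Finset.sum_congr rfl fun p hp => ?_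
  rw [Finset.HasAntidiagonal.mem_antidiagonal] at hp
  rw [h p.2 (by omega)]

lemma coeff_pow_eq_zero {F : R⟦X⟧} (hF : constantCoeff F = 0) :
    ∀ {k n : ℕ}, n < k → coeff n (F ^ k) = 0 := by
  intro k
  induction k with
  | zero => omega
  | succ k ih =>
    intro n hn
    rw [pow_succ, coeff_mul]
    refine Finset.sum_eq_zero fun p hp => ?_
    rw [Finset.HasAntidiagonal.mem_antidiagonal] at hp
    rcases Nat.eq_zero_or_pos p.2 with h2 | h2
    · rw [h2, ← coeff_zero_eq_constantCoeff] at *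
      rw [hF, mul_zero]
    · rw [ih (show p.1 < k by omega), zero_mul]

lemma agree_pow {P Q : R⟦X⟧} {n : ℕ} (h : ∀ i ≤ n, coeff i P = coeff i Q) (k : ℕ) :
    ∀ i ≤ n, coeff i (P ^ k) = coeff i (Q ^ k) := by
  induction k with
  | zero => intro i _; rfl
  | succ k ih =>
    intro i hi
    rw [pow_succ, pow_succ, coeff_mul, coeff_mul]
    refine Finset.sum_congr rfl fun p hp => ?_
    rw [Finset.HasAntidiagonal.mem_antidiagonal] at hp
    rw [ih p.1 (by omega), h p.2 (by omega)]

lemma coeff_sum_pow (c : ℕ → ℚ) {F : R⟦X⟧} (hF : constantCoeff F = 0) {n N : ℕ}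
    (h : n ≤ N) :
    coeff n (∑ k ∈ range (N+1), c k • F ^ k)
      = ∑ k ∈ range (n+1), c k • coeff n (F ^ k) := by
  rw [map_sum]
  simp_rw [coeff_smul]
  refine (Finset.sum_subset (by intro x hx; simp only [mem_range] at *; omega) ?_).symm
  intro k hk hnk
  simp only [mem_range, not_lt] at hk hnk
  rw [coeff_pow_eq_zero hF (by omega), smul_zero]

lemma coeff_pexp {F : R⟦X⟧} (hF : constantCoeff F = 0) (n : ℕ) :
    coeff n (pexp F)
      = ∑ k ∈ range (n+1), ((k.factorial : ℚ))⁻¹ • coeff n (F ^ k) := by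
  rw [pexp, coeff_mk, coeff_sum_pow _ hF le_rfl]


lemma sum_Icc_eq_sum_range {M : Type} [AddCommMonoid M] (n : ℕ) (f : ℕ → M) (h0 : f 0 = 0) :
    ∑ k ∈ Finset.Icc 1 n, f k = ∑ k ∈ range (n+1), f k := by
  refine Finset.sum_subset (fun x hx => ?_) (fun x hx hnx => ?_)
  · simp only [Finset.mem_Icc, mem_range] at *; omega
  · simp only [Finset.mem_Icc, mem_range] at hx hnx
    have : x = 0 := by omega
    rw [this, h0]

lemma coeff_plog {F : R⟦X⟧} (hF : constantCoeff F = 1) (n : ℕ) :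
    coeff n (plog F)
      = ∑ k ∈ range (n+1), (((-1 : ℚ)) ^ (k+1) / k) • coeff n ((F - 1) ^ k) := by
  have hu : constantCoeff (F - 1) = 0 := by
    rw [map_sub, hF, map_one, sub_self]
  rw [plog, coeff_mk, sum_Icc_eq_sum_range _ _ (by norm_num),
    coeff_sum_pow _ hu le_rfl]

lemma constantCoeff_plog (F : R⟦X⟧) : constantCoeff (plog F) = 0 := by
  rw [← coeff_zero_eq_constantCoeff, plog, coeff_mk]
  simp

lemma constantCoeff_pexp {F : R⟦X⟧} (hF : constantCoeff F = 0) :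
    constantCoeff (pexp F) = 1 := by
  rw [← coeff_zero_eq_constantCoeff, coeff_pexp hF]
  simp

lemma deriv_rat_smul (q : ℚ) (F : R⟦X⟧) : d⁄dX R (q • F) = q • d⁄dX R F := by
  ext n
  rw [coeff_derivative, coeff_smul, coeff_smul, coeff_derivative, smul_mul_assoc]

lemma deriv_sum {s : Finset ℕ} {f : ℕ → R⟦X⟧} :
    d⁄dX R (∑ k ∈ s, f k) = ∑ k ∈ s, d⁄dX R (f k) := by
  classical
  induction s using Finset.induction with
  | empty => simp
  | insert _ _ h ih => rw [Finset.sum_insert h, map_add, ih, Finset.sum_insert h]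

lemma fact_inv_smul_nsmul (k : ℕ) (x : R⟦X⟧) :
    (((k+1).factorial : ℚ))⁻¹ • ((k+1) • x) = ((k.factorial : ℚ))⁻¹ • x := by
  rw [← Nat.cast_smul_eq_nsmul ℚ, smul_smul]
  congr 1
  rw [Nat.factorial_succ, Nat.cast_mul, mul_inv]
  field_simp

/-- derivative of pexp -/
lemma deriv_pexp {F : R⟦X⟧} (hF : constantCoeff F = 0) :
    d⁄dX R (pexp F) = d⁄dX R F * pexp F := by
  ext n
  have key : d⁄dX R (∑ k ∈ range (n+2), ((k.factorial : ℚ))⁻¹ • F ^ k)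
      = d⁄dX R F * ∑ k ∈ range (n+1), ((k.factorial : ℚ))⁻¹ • F ^ k := by
    rw [deriv_sum, Finset.sum_range_succ']
    have h0 : d⁄dX R ((((0:ℕ).factorial : ℚ))⁻¹ • F ^ 0) = 0 := by
      rw [pow_zero, deriv_rat_smul, Derivation.map_one_eq_zero, smul_zero]
    rw [h0, add_zero, Finset.mul_sum]
    refine Finset.sum_congr rfl fun k hk => ?_
    rw [deriv_rat_smul, Derivation.leibniz_pow, fact_inv_smul_nsmul, Nat.add_sub_cancel,
      smul_eq_mul, Algebra.smul_def, Algebra.smul_def]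
    ring
  have h1 : coeff n (d⁄dX R (pexp F))
      = coeff n (d⁄dX R (∑ k ∈ range (n+2), ((k.factorial : ℚ))⁻¹ • F ^ k)) := by
    rw [coeff_derivative, coeff_derivative, coeff_pexp hF,
      coeff_sum_pow _ hF (by omega)]
  rw [h1, key]
  refine coeff_mul_congr_right fun i hi => ?_
  rw [coeff_pexp hF, coeff_sum_pow _ hF (by omega)]

lemma rat_neg_one_pow_smul (j : ℕ) (Y : R⟦X⟧) :
    ((-1 : ℚ) ^ j) • Y = (-1 : R⟦X⟧) ^ j * Y := by
  rw [Algebra.smul_def, map_pow, map_neg, map_one]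

lemma deriv_plog {F : R⟦X⟧} (hF : constantCoeff F = 1) :
    F * d⁄dX R (plog F) = d⁄dX R F := by
  set u : R⟦X⟧ := F - 1 with hu_def
  have hu : constantCoeff u = 0 := by rw [hu_def, map_sub, hF, map_one, sub_self]
  have hdu : d⁄dX R u = d⁄dX R F := by
    rw [hu_def, map_sub, Derivation.map_one_eq_zero, sub_zero]
  ext n
  set V : R⟦X⟧ := ∑ k ∈ range (n+1), (-u) ^ k with hV_def
  -- Step 1: agreement of d(plog F) with V * du on coefficients ≤ n
  have step1 : ∀ m ≤ n, coeff m (d⁄dX R (plog F)) = coeff m (V * d⁄dX R u) := by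
    intro m hm
    have e1 : coeff m (d⁄dX R (plog F))
        = coeff m (d⁄dX R (∑ k ∈ Finset.Icc 1 (m+1), (((-1 : ℚ)) ^ (k+1) / k) • u ^ k)) := by
      rw [coeff_derivative, coeff_derivative, plog, coeff_mk]
    rw [e1, deriv_sum]
    have e2 : ∀ k ∈ Finset.Icc 1 (m+1),
        d⁄dX R ((((-1 : ℚ)) ^ (k+1) / k) • u ^ k)
          = ((-1 : ℚ) ^ (k+1)) • (u ^ (k-1) * d⁄dX R u) := by
      intro k hk
      simp only [Finset.mem_Icc] at hk
      rw [deriv_rat_smul, Derivation.leibniz_pow, ← Nat.cast_smul_eq_nsmul ℚ, smul_smul]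
      have : (-1 : ℚ) ^ (k+1) / k * k = (-1 : ℚ) ^ (k+1) := by
        have hk0 : (k:ℚ) ≠ 0 := Nat.cast_ne_zero.mpr (by omega)
        field_simp
      rw [this, smul_eq_mul]
    rw [Finset.sum_congr rfl e2]
    have e3 : ∑ k ∈ Finset.Icc 1 (m+1), ((-1 : ℚ) ^ (k+1)) • (u ^ (k-1) * d⁄dX R u)
        = ∑ j ∈ range (m+1), (-u) ^ j * d⁄dX R u := by
      rw [show Finset.Icc 1 (m+1) = Finset.Ico 1 (m+2) by rfl]
      rw [Finset.sum_Ico_eq_sum_range]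
      refine Finset.sum_congr (by norm_num) fun j hj => ?_
      rw [rat_neg_one_pow_smul, show 1 + j - 1 = j by omega]
      have : ((-1 : R⟦X⟧)) ^ (1 + j + 1) = (-1) ^ j := by
        rw [show 1 + j + 1 = j + 2 by omega, pow_add]
        norm_num
      rw [this, neg_pow u j, mul_assoc]
    rw [e3, hV_def, Finset.sum_mul]
    -- both sums; the right side has extra terms j with m < j ≤ n which have zero coeff m
    rw [map_sum, map_sum]
    refine (Finset.sum_subset (by intro x hx; simp only [mem_range] at *; omega) ?_)
    intro j hj hnj
    simp only [mem_range, not_lt] at hj hnj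
    refine coeff_mul_eq_zero_left fun i hi => ?_
    refine coeff_pow_eq_zero (by rw [map_neg, hu, neg_zero]) (by omega)
  have step2 : coeff n (F * d⁄dX R (plog F)) = coeff n (F * (V * d⁄dX R u)) :=
    coeff_mul_congr_right step1
  rw [step2]
  have geom : F * V = 1 - (-u) ^ (n+1) := by
    have := geom_sum_mul (-u) (n+1)
    have hF1 : F = 1 - (-u) := by rw [hu_def]; ring
    calc F * V = -((∑ i ∈ range (n+1), (-u) ^ i) * (-u - 1)) := by rw [hF1, hV_def]; ring
    _ = -((-u) ^ (n+1) - 1) := by rw [this]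
    _ = 1 - (-u) ^ (n+1) := by ring
  have : F * (V * d⁄dX R u) = d⁄dX R u - (-u) ^ (n+1) * d⁄dX R u := by
    rw [← mul_assoc, geom]; ring
  rw [this, map_sub]
  have hz : coeff n ((-u) ^ (n+1) * d⁄dX R u) = 0 := by
    refine coeff_mul_eq_zero_left fun i hi => ?_
    exact coeff_pow_eq_zero (by rw [map_neg, hu, neg_zero]) (by omega)
  rw [hz, sub_zero, hdu]


instance (priority := 100) : NoZeroSMulDivisors ℕ R := by
  constructor
  intro n x h
  rcases Nat.eq_zero_or_pos n with h0 | h0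
  · exact Or.inl h0
  · refine Or.inr ?_
    have : ((n:ℚ)) • x = 0 := by rwa [Nat.cast_smul_eq_nsmul]
    have := congrArg (fun y => ((n:ℚ))⁻¹ • y) this
    simpa [smul_smul, inv_mul_cancel₀ (show (n:ℚ) ≠ 0 from Nat.cast_ne_zero.mpr (by omega))]
      using this

instance (priority := 100) : IsAddTorsionFree R := by
  constructor
  intro n hn a b h
  have h' : ((n:ℚ)) • a = ((n:ℚ)) • b := by
    rw [Nat.cast_smul_eq_nsmul, Nat.cast_smul_eq_nsmul]; exact h
  have := congrArg (fun y => ((n:ℚ))⁻¹ • y) h'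
  simpa [smul_smul, inv_mul_cancel₀ (show (n:ℚ) ≠ 0 from Nat.cast_ne_zero.mpr hn)]
    using this

lemma ode_unique {H F : R⟦X⟧} (hH : constantCoeff H = 1) (hF : constantCoeff F = 1)
    (hode : d⁄dX R H * F = H * d⁄dX R F) : H = F := by
  have hFu : IsUnit F := by
    rw [isUnit_iff_constantCoeff, hF]; exact isUnit_one
  obtain ⟨v, hv⟩ := hFu
  have h1 : (↑v : R⟦X⟧) * ↑v⁻¹ = 1 := v.mul_inv
  set W : R⟦X⟧ := H * ↑v⁻¹ with hW_def
  have hdW : d⁄dX R W = 0 := by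
    have e : d⁄dX R W = H * (-(↑v⁻¹ : R⟦X⟧)^2 * d⁄dX R F) + (↑v⁻¹ : R⟦X⟧) * d⁄dX R H := by
      rw [hW_def, Derivation.leibniz, derivative_inv, hv, smul_eq_mul, smul_eq_mul]
    have e2 : (↑v : R⟦X⟧)^2 * d⁄dX R W = 0 := by
      rw [e]
      have : (↑v : R⟦X⟧)^2 * (H * (-(↑v⁻¹ : R⟦X⟧)^2 * d⁄dX R F) + (↑v⁻¹ : R⟦X⟧) * d⁄dX R H)
          = ((↑v : R⟦X⟧) * ↑v⁻¹)^2 * (H * d⁄dX R F) * (-1)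
            + ((↑v : R⟦X⟧) * ↑v⁻¹) * (↑v * d⁄dX R H) := by ring
      rw [this, h1, hv, ← hode]
      ring
    have hu2 : IsUnit ((↑v : R⟦X⟧)^2) := (v^2).isUnit
    obtain ⟨w, hw⟩ := hu2
    rwa [← hw, Units.mul_right_eq_zero] at e2
  have hWc : constantCoeff W = 1 := by
    have hvc : constantCoeff (↑v : R⟦X⟧) = 1 := by rw [hv, hF]
    have : constantCoeff (↑v : R⟦X⟧) * constantCoeff (↑v⁻¹ : R⟦X⟧) = 1 := by
      rw [← map_mul, h1, map_one]
    rw [hvc, one_mul] at this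
    rw [hW_def, map_mul, hH, one_mul, this]
  have hW1 : W = 1 := by
    refine PowerSeries.derivative.ext ?_ ?_
    · rw [hdW, Derivation.map_one_eq_zero]
    · rw [hWc, map_one]
  have : H * ((↑v⁻¹ : R⟦X⟧) * ↑v) = 1 * ↑v := by
    rw [← mul_assoc, ← hW_def, hW1]
  rwa [v.inv_mul, mul_one, one_mul, hv] at this

lemma pexp_log {F : R⟦X⟧} (hF : constantCoeff F = 1) : pexp (plog F) = F := by
  have h0 : constantCoeff (plog F) = 0 := constantCoeff_plog F
  refine ode_unique (constantCoeff_pexp h0) hF ?_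
  rw [deriv_pexp h0]
  calc d⁄dX R (plog F) * pexp (plog F) * F
      = (F * d⁄dX R (plog F)) * pexp (plog F) := by ring
    _ = pexp (plog F) * d⁄dX R F := by rw [deriv_plog hF]; ring

lemma pexp_injective {F G : R⟦X⟧} (hF : constantCoeff F = 0)
    (hG : constantCoeff G = 0) (h : pexp F = pexp G) : F = G := by
  have hu : IsUnit (pexp F) := by
    rw [isUnit_iff_constantCoeff, constantCoeff_pexp hF]; exact isUnit_one
  obtain ⟨w, hw⟩ := hu
  have h1 : d⁄dX R F * pexp F = d⁄dX R G * pexp F := by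
    rw [← deriv_pexp hF, h, deriv_pexp hG]
  have h2 : d⁄dX R F = d⁄dX R G := by
    have := congrArg (fun y => y * (↑w⁻¹ : R⟦X⟧)) h1
    simpa [← hw, mul_assoc, w.mul_inv] using this
  refine PowerSeries.derivative.ext h2 ?_
  rw [hF, hG]

variable {S : Type} [CommRing S] [Algebra ℚ S]

lemma map_pexp (φ : R →+* S) (F : R⟦X⟧) :
    PowerSeries.map φ (pexp F) = pexp (PowerSeries.map φ F) := by
  ext n
  rw [coeff_map, pexp, pexp, coeff_mk, coeff_mk, map_sum, map_sum, map_sum]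
  refine Finset.sum_congr rfl fun k hk => ?_
  rw [coeff_smul, coeff_smul, map_rat_smul, ← coeff_map, map_pow]

lemma map_plog (φ : R →+* S) (F : R⟦X⟧) :
    PowerSeries.map φ (plog F) = plog (PowerSeries.map φ F) := by
  ext n
  rw [coeff_map, plog, plog, coeff_mk, coeff_mk, map_sum, map_sum, map_sum]
  refine Finset.sum_congr rfl fun k hk => ?_
  rw [coeff_smul, coeff_smul, map_rat_smul, ← coeff_map, map_pow, map_sub, map_one]

lemma coeff_pow_mul_pow_eq_zero {F G : R⟦X⟧} (hF : constantCoeff F = 0)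
    (hG : constantCoeff G = 0) {a b n : ℕ} (h : n < a + b) :
    coeff n (F ^ a * G ^ b) = 0 := by
  rw [coeff_mul]
  refine Finset.sum_eq_zero fun p hp => ?_
  rw [Finset.HasAntidiagonal.mem_antidiagonal] at hp
  rcases Nat.lt_or_ge p.1 a with h1 | h1
  · rw [coeff_pow_eq_zero hF h1, zero_mul]
  · rw [coeff_pow_eq_zero hG (by omega), mul_zero]

lemma fact_inv_mul_choose (j k : ℕ) (h : j ≤ k) :
    ((k.factorial : ℚ))⁻¹ * (k.choose j : ℚ)
      = ((j.factorial : ℚ))⁻¹ * (((k-j).factorial : ℚ))⁻¹ := by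
  have key := Nat.choose_mul_factorial_mul_factorial h
  have key' : ((k.choose j : ℚ)) * (j.factorial : ℚ) * ((k-j).factorial : ℚ)
      = (k.factorial : ℚ) := by
    exact_mod_cast key
  have h1 : ((j.factorial : ℚ)) ≠ 0 := Nat.cast_ne_zero.mpr (Nat.factorial_ne_zero j)
  have h2 : (((k-j).factorial : ℚ)) ≠ 0 := Nat.cast_ne_zero.mpr (Nat.factorial_ne_zero _)
  have h3 : ((k.factorial : ℚ)) ≠ 0 := Nat.cast_ne_zero.mpr (Nat.factorial_ne_zero k)
  field_simp
  linarith [key']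

lemma pexp_add {F G : R⟦X⟧} (hF : constantCoeff F = 0) (hG : constantCoeff G = 0) :
    pexp (F + G) = pexp F * pexp G := by
  ext n
  have hFG : constantCoeff (F + G) = 0 := by rw [map_add, hF, hG, add_zero]
  -- RHS
  have hR : coeff n (pexp F * pexp G)
      = ∑ a ∈ range (n+1), ∑ b ∈ range (n+1),
          (((a.factorial : ℚ))⁻¹ * ((b.factorial : ℚ))⁻¹) • coeff n (F ^ a * G ^ b) := by
    have hA : ∀ i ≤ n, coeff i (pexp F)
        = coeff i (∑ k ∈ range (n+1), ((k.factorial : ℚ))⁻¹ • F ^ k) := by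
      intro i hi
      rw [coeff_pexp hF, coeff_sum_pow _ hF hi]
    have hB : ∀ i ≤ n, coeff i (pexp G)
        = coeff i (∑ k ∈ range (n+1), ((k.factorial : ℚ))⁻¹ • G ^ k) := by
      intro i hi
      rw [coeff_pexp hG, coeff_sum_pow _ hG hi]
    have e1 : coeff n (pexp F * pexp G)
        = coeff n ((∑ k ∈ range (n+1), ((k.factorial : ℚ))⁻¹ • F ^ k)
            * (∑ k ∈ range (n+1), ((k.factorial : ℚ))⁻¹ • G ^ k)) := by
      calc coeff n (pexp F * pexp G)
          = coeff n (pexp F * (∑ k ∈ range (n+1), ((k.factorial : ℚ))⁻¹ • G ^ k)) :=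
            coeff_mul_congr_right hB
        _ = coeff n ((∑ k ∈ range (n+1), ((k.factorial : ℚ))⁻¹ • G ^ k) * pexp F) := by
            rw [mul_comm]
        _ = coeff n ((∑ k ∈ range (n+1), ((k.factorial : ℚ))⁻¹ • G ^ k)
              * (∑ k ∈ range (n+1), ((k.factorial : ℚ))⁻¹ • F ^ k)) :=
            coeff_mul_congr_right hA
        _ = _ := by rw [mul_comm]
    rw [e1, Finset.sum_mul]
    rw [map_sum]
    refine Finset.sum_congr rfl fun a ha => ?_
    rw [Finset.mul_sum, map_sum]
    refine Finset.sum_congr rfl fun b hb => ?_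
    rw [smul_mul_assoc, mul_smul_comm, coeff_smul, coeff_smul, smul_smul]
  -- LHS
  have hL : coeff n (pexp (F + G))
      = ∑ k ∈ range (n+1), ∑ j ∈ range (k+1),
          (((j.factorial : ℚ))⁻¹ * (((k-j).factorial : ℚ))⁻¹) • coeff n (F ^ j * G ^ (k-j)) := by
    rw [coeff_pexp hFG]
    refine Finset.sum_congr rfl fun k hk => ?_
    rw [add_pow]
    rw [map_sum, Finset.smul_sum]
    refine Finset.sum_congr rfl fun j hj => ?_
    simp only [mem_range] at hj
    have hjk : j ≤ k := by omega
    have cast_eq : coeff n (F ^ j * G ^ (k-j) * (k.choose j : R⟦X⟧))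
        = (k.choose j : ℚ) • coeff n (F ^ j * G ^ (k-j)) := by
      rw [mul_comm, ← nsmul_eq_mul, ← Nat.cast_smul_eq_nsmul ℚ, coeff_smul]
    rw [cast_eq, smul_smul, fact_inv_mul_choose j k hjk]
  rw [hL, hR]
  -- both equal sum over the triangle
  have hzero : ∀ a b : ℕ, n < a + b →
      (((a.factorial : ℚ))⁻¹ * ((b.factorial : ℚ))⁻¹) • coeff n (F ^ a * G ^ b) = 0 := by
    intro a b hab
    rw [coeff_pow_mul_pow_eq_zero hF hG hab, smul_zero]
  set f : ℕ × ℕ → R := fun p =>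
    (((p.1.factorial : ℚ))⁻¹ * ((p.2.factorial : ℚ))⁻¹) • coeff n (F ^ p.1 * G ^ p.2)
    with hf_def
  have hLf : ∑ k ∈ range (n+1), ∑ j ∈ range (k+1),
      (((j.factorial : ℚ))⁻¹ * (((k-j).factorial : ℚ))⁻¹) • coeff n (F ^ j * G ^ (k-j))
      = ∑ p ∈ (range (n+1) ×ˢ range (n+1)).filter (fun p => p.1 + p.2 ≤ n), f p := by
    rw [Finset.sum_sigma']
    refine Finset.sum_nbij' (fun p => (p.2, p.1 - p.2)) (fun p => ⟨p.1 + p.2, p.1⟩)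
      ?_ ?_ ?_ ?_ ?_
    · intro p hp
      simp only [Finset.mem_sigma, mem_range, Finset.mem_filter, Finset.mem_product] at *
      omega
    · intro p hp
      simp only [Finset.mem_sigma, mem_range, Finset.mem_filter, Finset.mem_product] at *
      omega
    · intro p hp
      simp only [Finset.mem_sigma, mem_range] at hp
      obtain ⟨a, b⟩ := p
      simp only at hp ⊢
      simp only [Sigma.mk.inj_iff]
      exact ⟨by omega, HEq.rfl⟩
    · intro p hp
      simp only [Finset.mem_filter, Finset.mem_product, mem_range] at hp
      obtain ⟨a, b⟩ := p
      simp only [Prod.mk.injEq] at hp ⊢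
      exact ⟨trivial, by omega⟩
    · intro p hp
      simp only [Finset.mem_sigma, mem_range] at hp
      rw [hf_def]
  have hRf : ∑ a ∈ range (n+1), ∑ b ∈ range (n+1),
      (((a.factorial : ℚ))⁻¹ * ((b.factorial : ℚ))⁻¹) • coeff n (F ^ a * G ^ b)
      = ∑ p ∈ (range (n+1) ×ˢ range (n+1)).filter (fun p => p.1 + p.2 ≤ n), f p := by
    rw [← Finset.sum_product']
    rw [← Finset.sum_filter_add_sum_filter_not (range (n+1) ×ˢ range (n+1))
      (fun p => p.1 + p.2 ≤ n) f]
    have : ∑ p ∈ (range (n+1) ×ˢ range (n+1)).filter (fun p => ¬ p.1 + p.2 ≤ n), f p = 0 := by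
      refine Finset.sum_eq_zero fun p hp => ?_
      simp only [Finset.mem_filter, Finset.mem_product, mem_range, not_le] at hp
      exact hzero p.1 p.2 hp.2
    rw [this, add_zero]
  rw [hLf, hRf]

lemma plog_mul {F G : R⟦X⟧} (hF : constantCoeff F = 1) (hG : constantCoeff G = 1) :
    plog (F * G) = plog F + plog G := by
  have h1 : constantCoeff (plog (F * G)) = 0 := constantCoeff_plog _
  have h2 : constantCoeff (plog F + plog G) = 0 := by
    rw [map_add, constantCoeff_plog, constantCoeff_plog, add_zero]
  refine pexp_injective h1 h2 ?_
  rw [pexp_log (by rw [map_mul, hF, hG, mul_one]),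
    pexp_add (constantCoeff_plog F) (constantCoeff_plog G),
    pexp_log hF, pexp_log hG]

end ExpLogAux

namespace GradedAux

open PowerSeries Finset DirectSum

variable {A : Type} [CommRing A] [Algebra ℚ A]
variable (ℬ : ℕ → Submodule ℚ A) [GradedAlgebra ℬ]

lemma proj_of_mem {i n : ℕ} {a : A} (h : a ∈ ℬ i) :
    GradedAlgebra.proj ℬ n a = if n = i then a else 0 := by
  rw [GradedAlgebra.proj_apply]
  rcases eq_or_ne n i with rfl | hne
  · rw [if_pos rfl, DirectSum.decompose_of_mem_same ℬ h]
  · rw [if_neg hne, DirectSum.decompose_of_mem_ne ℬ h (Ne.symm hne)]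

lemma proj_mul (a b : A) (n : ℕ) :
    GradedAlgebra.proj ℬ n (a * b)
      = ∑ p ∈ Finset.HasAntidiagonal.antidiagonal n,
          GradedAlgebra.proj ℬ p.1 a * GradedAlgebra.proj ℬ p.2 b := by
  revert b n
  refine DirectSum.Decomposition.inductionOn ℬ
    (motive := fun a => ∀ b (n : ℕ), GradedAlgebra.proj ℬ n (a * b)
      = ∑ p ∈ Finset.HasAntidiagonal.antidiagonal n,
          GradedAlgebra.proj ℬ p.1 a * GradedAlgebra.proj ℬ p.2 b) ?_ ?_ ?_ a
  · intro b n
    simp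
  · rintro i ⟨a, ha⟩
    intro b n
    revert n
    refine DirectSum.Decomposition.inductionOn ℬ
      (motive := fun b => ∀ (n : ℕ), GradedAlgebra.proj ℬ n (a * b)
        = ∑ p ∈ Finset.HasAntidiagonal.antidiagonal n,
            GradedAlgebra.proj ℬ p.1 a * GradedAlgebra.proj ℬ p.2 b) ?_ ?_ ?_ b
    · intro n
      simp
    · rintro j ⟨b, hb⟩
      intro n
      rw [proj_of_mem ℬ (SetLike.mul_mem_graded ha hb)]
      have he : ∀ p ∈ Finset.HasAntidiagonal.antidiagonal n,
          GradedAlgebra.proj ℬ p.1 a * GradedAlgebra.proj ℬ p.2 b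
            = if p = (i, j) then a * b else 0 := by
        intro p hp
        rw [proj_of_mem ℬ ha, proj_of_mem ℬ hb]
        rcases eq_or_ne p.1 i with h1 | h1 <;> rcases eq_or_ne p.2 j with h2 | h2 <;>
          simp [h1, h2, Prod.ext_iff]
      rw [Finset.sum_congr rfl he, Finset.sum_ite_eq' (Finset.HasAntidiagonal.antidiagonal n) (i, j)
        (fun _ => a * b)]
      simp only [Finset.HasAntidiagonal.mem_antidiagonal]
      by_cases h : i + j = n
      · rw [if_pos h, if_pos h.symm]
      · rw [if_neg h, if_neg (fun hh => h hh.symm)]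
    · intro b b' hb hb' n
      rw [mul_add, map_add, hb n, hb' n, ← Finset.sum_add_distrib]
      refine Finset.sum_congr rfl fun p hp => ?_
      rw [map_add, mul_add]
  · intro a a' ha ha' b n
    rw [add_mul, map_add, ha b n, ha' b n, ← Finset.sum_add_distrib]
    refine Finset.sum_congr rfl fun p hp => ?_
    rw [map_add, add_mul]

/-- generating series of the homogeneous components, as a ring hom -/
noncomputable def gradedSeries : A →+* A⟦X⟧ where
  toFun a := PowerSeries.mk fun n => GradedAlgebra.proj ℬ n a
  map_one' := by
    ext n
    rw [coeff_mk, proj_of_mem ℬ (SetLike.one_mem_graded ℬ), coeff_one]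
  map_mul' a b := by
    ext n
    rw [coeff_mk, coeff_mul, proj_mul]
    exact Finset.sum_congr rfl fun p hp => by rw [coeff_mk, coeff_mk]
  map_zero' := by
    ext n
    rw [coeff_mk, map_zero, map_zero]
  map_add' a b := by
    ext n
    rw [coeff_mk, map_add, map_add, coeff_mk, coeff_mk]

lemma coeff_gradedSeries (a : A) (n : ℕ) :
    PowerSeries.coeff n (gradedSeries ℬ a) = GradedAlgebra.proj ℬ n a := by
  show PowerSeries.coeff n (PowerSeries.mk fun m => GradedAlgebra.proj ℬ m a) = _
  rw [coeff_mk]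

lemma coeff_mul_mem {F G : A⟦X⟧} (hF : ∀ n, coeff n F ∈ ℬ n)
    (hG : ∀ n, coeff n G ∈ ℬ n) (n : ℕ) : coeff n (F * G) ∈ ℬ n := by
  rw [coeff_mul]
  refine Submodule.sum_mem _ fun p hp => ?_
  rw [Finset.HasAntidiagonal.mem_antidiagonal] at hp
  have := SetLike.mul_mem_graded (hF p.1) (hG p.2)
  rwa [hp] at this

lemma coeff_pow_mem {F : A⟦X⟧} (hF : ∀ n, coeff n F ∈ ℬ n) (k : ℕ) :
    ∀ n, coeff n (F ^ k) ∈ ℬ n := by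
  induction k with
  | zero =>
    intro n
    rw [pow_zero, coeff_one]
    split_ifs with h
    · rw [h]; exact SetLike.one_mem_graded ℬ
    · exact Submodule.zero_mem _
  | succ k ih =>
    intro n
    rw [pow_succ]
    exact coeff_mul_mem ℬ ih hF n

end GradedAux


/-- In a graded connected commutative Hopf algebra of finite type over ℚ, a group-like
element of the completion (given by its sequence of homogeneous components, with
degree-zero component 1) is the exponential of a unique primitive element of the
completion.  Elements of the completion ∏ₙ Hₙ are encoded as sequences `ℕ → A` of
homogeneous components, and the degree-n component of exp(x) is the degree-n projection
of ∑_{k≤n} x^k/k! where only the components of x of degree between 1 and n matter. -/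
theorem grouplike_is_exp_of_unique_primitive
    (A : Type) [CommRing A] [HopfAlgebra ℚ A]
    (ℬ : ℕ → Submodule ℚ A) [GradedAlgebra ℬ]
    -- connectedness: the degree-zero part is ℚ·1
    (hconn : ℬ 0 = Submodule.span ℚ {1})
    -- finite type
    (hft : ∀ n, Module.Finite ℚ (ℬ n))
    -- the comultiplication respects the grading
    (hgradedComul : ∀ n, ∀ a ∈ ℬ n, Coalgebra.comul (R := ℚ) a ∈
      ⨆ i ∈ Finset.range (n + 1),
        Submodule.span ℚ {z : A ⊗[ℚ] A | ∃ b ∈ ℬ i, ∃ c ∈ ℬ (n - i), z = b ⊗ₜ[ℚ] c})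
    -- g is an element of the completion, given by its homogeneous components
    (g : ℕ → A) (hg : ∀ n, g n ∈ ℬ n)
    -- g is group-like: Δg = g ⊗ g and ε(g) = 1
    (hgrp : ∀ n, Coalgebra.comul (R := ℚ) (g n) =
      ∑ i ∈ Finset.range (n + 1), g i ⊗ₜ[ℚ] g (n - i))
    (hcounit : Coalgebra.counit (R := ℚ) (g 0) = 1)
    -- the degree-zero component of g is 1
    (hg0 : g 0 = 1) :
    ∃! x : ℕ → A, (∀ n, x n ∈ ℬ n) ∧ x 0 = 0 ∧
      (∀ n, Coalgebra.comul (R := ℚ) (x n) = x n ⊗ₜ[ℚ] 1 + 1 ⊗ₜ[ℚ] x n) ∧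
      ∀ n, g n = GradedAlgebra.proj ℬ n
        (∑ k ∈ Finset.range (n + 1),
          ((Nat.factorial k : ℚ)⁻¹) • (∑ j ∈ Finset.Icc 1 n, x j) ^ k) := by
  classical
  set G : PowerSeries A := PowerSeries.mk g with hG_def
  have hGcoeff : ∀ n, PowerSeries.coeff n G = g n := fun n => PowerSeries.coeff_mk n g
  have hGc : PowerSeries.constantCoeff G = 1 := by
    rw [← PowerSeries.coeff_zero_eq_constantCoeff_apply, hGcoeff, hg0]
  set L : PowerSeries A := ExpLogAux.plog G with hL_def
  have hLc : PowerSeries.constantCoeff L = 0 := ExpLogAux.constantCoeff_plog G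
  set x : ℕ → A := fun n => PowerSeries.coeff n L with hx_def
  have hLmk : PowerSeries.mk x = L := by
    ext n
    rw [PowerSeries.coeff_mk]
  have hxmem : ∀ n, x n ∈ ℬ n := by
    intro n
    show PowerSeries.coeff n L ∈ ℬ n
    rw [hL_def, ExpLogAux.plog, PowerSeries.coeff_mk, map_sum]
    refine Submodule.sum_mem _ fun k hk => ?_
    rw [PowerSeries.coeff_smul]
    refine Submodule.smul_mem _ _ ?_
    refine GradedAux.coeff_pow_mem ℬ (fun m => ?_) k n
    rw [map_sub]
    refine Submodule.sub_mem _ (hGcoeff m ▸ hg m) ?_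
    rw [PowerSeries.coeff_one]
    split_ifs with h
    · rw [h]; exact SetLike.one_mem_graded ℬ
    · exact Submodule.zero_mem _
  have hx0 : x 0 = 0 := by
    show PowerSeries.coeff 0 L = 0
    rw [PowerSeries.coeff_zero_eq_constantCoeff_apply, hLc]
  -- the key bridge between graded projections and power series coefficients
  have key : ∀ y : ℕ → A, (∀ n, y n ∈ ℬ n) → y 0 = 0 → ∀ n,
      GradedAlgebra.proj ℬ n (∑ k ∈ Finset.range (n + 1),
          ((Nat.factorial k : ℚ)⁻¹) • (∑ j ∈ Finset.Icc 1 n, y j) ^ k)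
        = PowerSeries.coeff n (ExpLogAux.pexp (PowerSeries.mk y)) := by
    intro y hy hy0 n
    set Y : PowerSeries A := PowerSeries.mk y with hY_def
    have hYc : PowerSeries.constantCoeff Y = 0 := by
      rw [← PowerSeries.coeff_zero_eq_constantCoeff_apply, hY_def, PowerSeries.coeff_mk, hy0]
    set s : A := ∑ j ∈ Finset.Icc 1 n, y j with hs_def
    have hs : ∀ m ≤ n, PowerSeries.coeff m (GradedAux.gradedSeries ℬ s)
        = PowerSeries.coeff m Y := by
      intro m hm
      rw [GradedAux.coeff_gradedSeries, hs_def, map_sum,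
        Finset.sum_congr rfl (fun j hj => GradedAux.proj_of_mem ℬ (hy j)),
        Finset.sum_ite_eq (Finset.Icc 1 n) m y, hY_def, PowerSeries.coeff_mk]
      simp only [Finset.mem_Icc]
      split_ifs with h
      · rfl
      · have : m = 0 := by omega
        rw [this, hy0]
    calc GradedAlgebra.proj ℬ n (∑ k ∈ Finset.range (n + 1),
          ((Nat.factorial k : ℚ)⁻¹) • s ^ k)
        = PowerSeries.coeff n (GradedAux.gradedSeries ℬ
            (∑ k ∈ Finset.range (n + 1), ((Nat.factorial k : ℚ)⁻¹) • s ^ k)) := by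
          rw [GradedAux.coeff_gradedSeries]
      _ = PowerSeries.coeff n (∑ k ∈ Finset.range (n + 1),
            ((Nat.factorial k : ℚ)⁻¹) • (GradedAux.gradedSeries ℬ s) ^ k) := by
          rw [map_sum]
          congr 1
          refine Finset.sum_congr rfl fun k hk => ?_
          rw [map_rat_smul, map_pow]
      _ = ∑ k ∈ Finset.range (n + 1),
            ((Nat.factorial k : ℚ)⁻¹) • PowerSeries.coeff n ((GradedAux.gradedSeries ℬ s) ^ k) := by
          rw [map_sum]
          refine Finset.sum_congr rfl fun k hk => ?_
          rw [PowerSeries.coeff_smul]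
      _ = ∑ k ∈ Finset.range (n + 1),
            ((Nat.factorial k : ℚ)⁻¹) • PowerSeries.coeff n (Y ^ k) := by
          refine Finset.sum_congr rfl fun k hk => ?_
          rw [ExpLogAux.agree_pow hs k n le_rfl]
      _ = PowerSeries.coeff n (ExpLogAux.pexp Y) := by
          rw [ExpLogAux.coeff_pexp hYc]
  refine ⟨x, ⟨hxmem, hx0, ?_, ?_⟩, ?_⟩
  · -- primitivity
    have ψdef : (Bialgebra.comulAlgHom ℚ A).toRingHom = (Bialgebra.comulAlgHom ℚ A).toRingHom := rfl
    set ψ : A →+* A ⊗[ℚ] A := (Bialgebra.comulAlgHom ℚ A).toRingHom with hψ_def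
    set ιL : A →+* A ⊗[ℚ] A :=
      (Algebra.TensorProduct.includeLeft (R := ℚ) (S := ℚ) (A := A) (B := A)).toRingHom with hιL_def
    set ιR : A →+* A ⊗[ℚ] A :=
      (Algebra.TensorProduct.includeRight (R := ℚ) (A := A) (B := A)).toRingHom with hιR_def
    have hψ_apply : ∀ a : A, ψ a = Coalgebra.comul (R := ℚ) a := fun a => rfl
    have hιL_apply : ∀ a : A, ιL a = a ⊗ₜ[ℚ] 1 := fun a => rfl
    have hιR_apply : ∀ a : A, ιR a = 1 ⊗ₜ[ℚ] a := fun a => rfl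
    have hmapG : PowerSeries.map ψ G = PowerSeries.map ιL G * PowerSeries.map ιR G := by
      ext n
      rw [PowerSeries.coeff_map, PowerSeries.coeff_mul, hGcoeff, hψ_apply, hgrp n,
        ← Finset.Nat.sum_antidiagonal_eq_sum_range_succ_mk (fun p => g p.1 ⊗ₜ[ℚ] g p.2)]
      refine Finset.sum_congr rfl fun p hp => ?_
      rw [PowerSeries.coeff_map, PowerSeries.coeff_map, hGcoeff, hGcoeff,
        hιL_apply, hιR_apply, Algebra.TensorProduct.tmul_mul_tmul, one_mul, mul_one]
    have hcl : PowerSeries.constantCoeff (PowerSeries.map ιL G) = 1 := by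
      rw [← PowerSeries.coeff_zero_eq_constantCoeff_apply, PowerSeries.coeff_map,
        PowerSeries.coeff_zero_eq_constantCoeff_apply, hGc, map_one]
    have hcr : PowerSeries.constantCoeff (PowerSeries.map ιR G) = 1 := by
      rw [← PowerSeries.coeff_zero_eq_constantCoeff_apply, PowerSeries.coeff_map,
        PowerSeries.coeff_zero_eq_constantCoeff_apply, hGc, map_one]
    have hLmap : PowerSeries.map ψ L = PowerSeries.map ιL L + PowerSeries.map ιR L := by
      rw [hL_def, ExpLogAux.map_plog, hmapG, ExpLogAux.plog_mul hcl hcr,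
        ← ExpLogAux.map_plog, ← ExpLogAux.map_plog]
    intro n
    have hc := congrArg (PowerSeries.coeff n) hLmap
    rw [map_add, PowerSeries.coeff_map, PowerSeries.coeff_map, PowerSeries.coeff_map] at hc
    rw [show Coalgebra.comul (R := ℚ) (x n) = ψ (PowerSeries.coeff n L) from rfl, hc,
      hιL_apply, hιR_apply]
  · -- the exponential property
    intro n
    rw [key x hxmem hx0 n, hLmk, ExpLogAux.pexp_log hGc, hGcoeff]
  · -- uniqueness
    rintro y ⟨hymem, hy0, _hyprim, hyexp⟩
    have hYG : ExpLogAux.pexp (PowerSeries.mk y) = G := by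
      ext n
      rw [← key y hymem hy0 n, ← hyexp n, hGcoeff]
    have hXG : ExpLogAux.pexp (PowerSeries.mk x) = G := by
      rw [hLmk, ExpLogAux.pexp_log hGc]
    have hY0 : PowerSeries.constantCoeff (PowerSeries.mk y) = 0 := by
      rw [← PowerSeries.coeff_zero_eq_constantCoeff_apply, PowerSeries.coeff_mk, hy0]
    have hX0 : PowerSeries.constantCoeff (PowerSeries.mk x) = 0 := by
      rw [← PowerSeries.coeff_zero_eq_constantCoeff_apply, PowerSeries.coeff_mk, hx0]
    have heq := ExpLogAux.pexp_injective hY0 hX0 (hYG.trans hXG.symm)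
    funext n
    have := congrArg (PowerSeries.coeff n) heq
    rwa [PowerSeries.coeff_mk, PowerSeries.coeff_mk] at this
end

section
/- For nonzero integers m and p, the coefficient of h^{2n} in ln A_{T(m,p)}(e^h) vanishes if and only if (m^{2n}-1)(p^{2n}-1) = 0, i.e., if and only if m ∈ {1,-1} or p ∈ {1,-1}. -/
open PowerSeries Finset

/-! ### Auxiliary lemmas -/

lemma coeff_plog (F : PowerSeries ℚ) (n : ℕ) :
    PowerSeries.coeff n (plog F) =
      ∑ k ∈ Finset.Icc 1 n, ((-1 : ℚ) ^ (k + 1) / (k : ℚ)) *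
        PowerSeries.coeff n ((F - 1) ^ k) :=
  coeff_mk _ _

lemma constantCoeff_plog (F : PowerSeries ℚ) :
    PowerSeries.constantCoeff (plog F) = 0 := by
  rw [← coeff_zero_eq_constantCoeff_apply, coeff_plog]
  simp

lemma plog_one : plog 1 = 0 := by
  ext n
  rw [coeff_plog]
  rw [map_zero]
  refine Finset.sum_eq_zero fun k hk => ?_
  have hk1 : 1 ≤ k := (Finset.mem_Icc.mp hk).1
  rw [sub_self, zero_pow (by omega : k ≠ 0), map_zero, mul_zero]

lemma derivative_plog (F : PowerSeries ℚ) (hF : PowerSeries.constantCoeff F = 1) :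
    d⁄dX ℚ (plog F) = (d⁄dX ℚ F) * F⁻¹ := by
  set G : PowerSeries ℚ := F - 1 with hG
  have hG0 : PowerSeries.constantCoeff G = 0 := by simp [hG, hF]
  have hXdvd : (X : PowerSeries ℚ) ∣ G := X_dvd_iff.mpr hG0
  have hdF : d⁄dX ℚ F = d⁄dX ℚ G := by
    rw [hG, map_sub, Derivation.map_one_eq_zero, sub_zero]
  ext n
  rw [coeff_derivative, coeff_plog, Finset.sum_mul]
  have hL : ∀ k ∈ Finset.Icc 1 (n + 1),
      ((-1 : ℚ) ^ (k + 1) / (k : ℚ)) * PowerSeries.coeff (n + 1) ((F - 1) ^ k) * ((n : ℚ) + 1)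
        = (-1 : ℚ) ^ (k + 1) * PowerSeries.coeff n (G ^ (k - 1) * d⁄dX ℚ G) := by
    intro k hk
    have hk1 : 1 ≤ k := (Finset.mem_Icc.mp hk).1
    have hkQ : (k : ℚ) ≠ 0 := Nat.cast_ne_zero.mpr (by omega)
    have h1 : PowerSeries.coeff (n + 1) (G ^ k) * ((n : ℚ) + 1)
        = PowerSeries.coeff n (d⁄dX ℚ (G ^ k)) := by
      rw [coeff_derivative]
    have h2 : d⁄dX ℚ (G ^ k) = k • (G ^ (k - 1) * d⁄dX ℚ G) := by
      rw [Derivation.leibniz_pow, smul_eq_mul]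
    rw [← hG, mul_assoc, h1, h2, map_nsmul, nsmul_eq_mul]
    field_simp
  rw [Finset.sum_congr rfl hL]
  -- right-hand side
  have hFu : F * F⁻¹ = 1 :=
    PowerSeries.mul_inv_cancel F (by rw [hF]; exact one_ne_zero)
  have hgeom : F * (∑ j ∈ Finset.range (n + 1), (-G) ^ j) = 1 - (-G) ^ (n + 1) := by
    have h := geom_sum_mul (-G) (n + 1)
    have hF' : F = -(-G - 1) := by rw [hG]; ring
    rw [hF']
    linear_combination -h
  have hkey : F⁻¹ = (∑ j ∈ Finset.range (n + 1), (-G) ^ j) + F⁻¹ * (-G) ^ (n + 1) := by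
    calc F⁻¹ = F⁻¹ * 1 := (mul_one _).symm
    _ = F⁻¹ * (F * (∑ j ∈ Finset.range (n + 1), (-G) ^ j) + (-G) ^ (n + 1)) := by
        rw [hgeom]; ring
    _ = (F * F⁻¹) * (∑ j ∈ Finset.range (n + 1), (-G) ^ j) + F⁻¹ * (-G) ^ (n + 1) := by ring
    _ = _ := by rw [hFu, one_mul]
  have hvanish : PowerSeries.coeff n (d⁄dX ℚ F * (F⁻¹ * (-G) ^ (n + 1))) = 0 := by
    have hdvd : (X : PowerSeries ℚ) ^ (n + 1) ∣ d⁄dX ℚ F * (F⁻¹ * (-G) ^ (n + 1)) := by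
      have : (X : PowerSeries ℚ) ^ (n + 1) ∣ (-G) ^ (n + 1) :=
        pow_dvd_pow_of_dvd ((dvd_neg).mpr hXdvd) _
      exact Dvd.dvd.mul_left (Dvd.dvd.mul_left this _) _
    exact (X_pow_dvd_iff.mp hdvd) n (Nat.lt_succ_self n)
  rw [hkey, mul_add, map_add, hvanish, add_zero, Finset.mul_sum, map_sum]
  have hR : ∀ j ∈ Finset.range (n + 1),
      PowerSeries.coeff n (d⁄dX ℚ F * (-G) ^ j)
        = (-1 : ℚ) ^ j * PowerSeries.coeff n (G ^ j * d⁄dX ℚ G) := by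
    intro j _
    rw [neg_pow, hdF]
    rw [show ((-1 : ℚ⟦X⟧) ^ j * G ^ j) = (PowerSeries.C ((-1 : ℚ) ^ j)) * G ^ j by
      rw [map_pow, map_neg, map_one]]
    rw [show d⁄dX ℚ G * (PowerSeries.C ((-1:ℚ) ^ j) * G ^ j)
        = PowerSeries.C ((-1:ℚ) ^ j) * (G ^ j * d⁄dX ℚ G) by ring]
    rw [coeff_C_mul]
  rw [Finset.sum_congr rfl hR]
  -- reindex the left sum
  have hII : Finset.Icc 1 (n + 1) = Finset.Ico 1 (n + 2) := by
    ext x; simp; omega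
  rw [hII, Finset.sum_Ico_eq_sum_range]
  refine Finset.sum_congr (by norm_num) fun i _ => ?_
  have h1 : 1 + i - 1 = i := by omega
  have h2 : ((-1 : ℚ)) ^ (1 + i + 1) = (-1) ^ i := by
    rw [show 1 + i + 1 = i + 2 by omega, pow_add]; norm_num
  rw [h1, h2]

lemma plog_mul (F G : PowerSeries ℚ) (hF : PowerSeries.constantCoeff F = 1)
    (hG : PowerSeries.constantCoeff G = 1) : plog (F * G) = plog F + plog G := by
  have hFG : PowerSeries.constantCoeff (F * G) = 1 := by
    rw [map_mul, hF, hG, one_mul]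
  have hFu : F * F⁻¹ = 1 := PowerSeries.mul_inv_cancel F (by rw [hF]; exact one_ne_zero)
  have hGu : G * G⁻¹ = 1 := PowerSeries.mul_inv_cancel G (by rw [hG]; exact one_ne_zero)
  apply derivative.ext
  · rw [derivative_plog _ hFG, map_add, derivative_plog _ hF, derivative_plog _ hG,
      PowerSeries.mul_inv_rev]
    have hl : d⁄dX ℚ (F * G) = F * d⁄dX ℚ G + G * d⁄dX ℚ F := by
      rw [Derivation.leibniz, smul_eq_mul, smul_eq_mul]
    rw [hl]
    calc (F * d⁄dX ℚ G + G * d⁄dX ℚ F) * (G⁻¹ * F⁻¹)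
        = (d⁄dX ℚ G * G⁻¹) * (F * F⁻¹) + (d⁄dX ℚ F * F⁻¹) * (G * G⁻¹) := by ring
    _ = d⁄dX ℚ F * F⁻¹ + d⁄dX ℚ G * G⁻¹ := by rw [hFu, hGu, mul_one, mul_one]; ring
  · rw [map_add, constantCoeff_plog, constantCoeff_plog, constantCoeff_plog, add_zero]

lemma plog_inv (F : PowerSeries ℚ) (hF : PowerSeries.constantCoeff F = 1) :
    plog F⁻¹ = -plog F := by
  have hFi : PowerSeries.constantCoeff F⁻¹ = 1 := by
    rw [PowerSeries.constantCoeff_inv, hF, inv_one]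
  have h := plog_mul F F⁻¹ hF hFi
  rw [PowerSeries.mul_inv_cancel F (by rw [hF]; exact one_ne_zero), plog_one] at h
  exact eq_neg_of_add_eq_zero_right h.symm

lemma plog_rescale (c : ℚ) (F : PowerSeries ℚ) :
    plog (PowerSeries.rescale c F) = PowerSeries.rescale c (plog F) := by
  ext n
  rw [coeff_plog, coeff_rescale, coeff_plog, Finset.mul_sum]
  refine Finset.sum_congr rfl fun k _ => ?_
  have : (PowerSeries.rescale c F - 1) ^ k = PowerSeries.rescale c ((F - 1) ^ k) := by
    rw [map_pow, map_sub, map_one]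
  rw [this, coeff_rescale]
  ring

/-- The series (e^x - 1)/x. -/
noncomputable def gser : PowerSeries ℚ :=
  PowerSeries.mk fun n => ((Nat.factorial (n + 1) : ℚ))⁻¹

lemma constantCoeff_gser : PowerSeries.constantCoeff gser = 1 := by
  rw [← coeff_zero_eq_constantCoeff_apply, gser, coeff_mk]
  norm_num

lemma constantCoeff_shc : PowerSeries.constantCoeff shc = 1 := by
  rw [← coeff_zero_eq_constantCoeff_apply, shc, coeff_mk]
  norm_num

lemma X_mul_gser : (X : PowerSeries ℚ) * gser = PowerSeries.exp ℚ - 1 := by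
  ext k
  cases k with
  | zero =>
    simp [coeff_zero_eq_constantCoeff_apply, constantCoeff_exp]
  | succ n =>
    rw [coeff_succ_X_mul, gser, coeff_mk, map_sub, coeff_exp, coeff_one]
    simp [Nat.succ_ne_zero, one_div]

lemma derivative_exp : d⁄dX ℚ (PowerSeries.exp ℚ) = PowerSeries.exp ℚ := by
  ext n
  rw [coeff_derivative, coeff_exp, coeff_exp]
  simp only [Algebra.algebraMap_self_apply, Nat.factorial_succ]
  have h1 : ((n + 1 : ℕ) : ℚ) ≠ 0 := by positivity
  have h2 : ((Nat.factorial n : ℕ) : ℚ) ≠ 0 := by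
    exact_mod_cast Nat.factorial_ne_zero n
  push_cast
  field_simp

lemma plog_exp : plog (PowerSeries.exp ℚ) = X := by
  apply derivative.ext
  · rw [derivative_plog _ (constantCoeff_exp), _root_.derivative_exp,
      PowerSeries.mul_inv_cancel _ (by rw [constantCoeff_exp]; exact one_ne_zero), derivative_X]
  · rw [constantCoeff_plog, constantCoeff_X]

lemma X_mul_derivative_gser :
    (X : PowerSeries ℚ) * d⁄dX ℚ gser = PowerSeries.exp ℚ - gser := by
  ext k
  cases k with
  | zero =>
    simp [coeff_zero_eq_constantCoeff_apply, constantCoeff_exp, constantCoeff_gser]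
  | succ n =>
    rw [coeff_succ_X_mul, coeff_derivative, gser, coeff_mk, map_sub, coeff_exp, coeff_mk]
    simp only [Algebra.algebraMap_self_apply]
    have h2 : ((Nat.factorial (n + 1) : ℕ) : ℚ) ≠ 0 := by
      exact_mod_cast Nat.factorial_ne_zero (n + 1)
    have h3 : ((Nat.factorial (n + 2) : ℕ) : ℚ) ≠ 0 := by
      exact_mod_cast Nat.factorial_ne_zero (n + 2)
    rw [show n + 1 + 1 = n + 2 from rfl, show Nat.factorial (n + 2) = (n + 2) * Nat.factorial (n+1)
      from Nat.factorial_succ (n+1)]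
    push_cast
    push_cast at h3
    field_simp
    ring

lemma gser_ne_zero : gser ≠ 0 := fun h => by
  have := constantCoeff_gser
  rw [h, map_zero] at this
  exact zero_ne_one this

lemma gser_mul_bernoulli : gser * bernoulliPowerSeries ℚ = 1 := by
  have h1 := bernoulliPowerSeries_mul_exp_sub_one ℚ
  rw [← X_mul_gser] at h1
  have h2 : (X : PowerSeries ℚ) * (gser * bernoulliPowerSeries ℚ) = X * 1 := by
    rw [mul_one]; linear_combination h1
  exact mul_left_cancel₀ PowerSeries.X_ne_zero h2

lemma bernoulli'_mul_gser : bernoulli'PowerSeries ℚ * gser = PowerSeries.exp ℚ := by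
  have h1 := bernoulli'PowerSeries_mul_exp_sub_one ℚ
  rw [← X_mul_gser] at h1
  have h2 : (X : PowerSeries ℚ) * (bernoulli'PowerSeries ℚ * gser) = X * PowerSeries.exp ℚ := by
    linear_combination h1
  exact mul_left_cancel₀ PowerSeries.X_ne_zero h2

lemma X_mul_derivative_plog_gser :
    (X : PowerSeries ℚ) * d⁄dX ℚ (plog gser) = bernoulli'PowerSeries ℚ - 1 := by
  have hg1 : PowerSeries.constantCoeff gser ≠ 0 := by
    rw [constantCoeff_gser]; exact one_ne_zero
  have hginv : gser⁻¹ * gser = 1 := PowerSeries.inv_mul_cancel _ hg1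
  have key : ((X : PowerSeries ℚ) * d⁄dX ℚ (plog gser)) * gser
      = (bernoulli'PowerSeries ℚ - 1) * gser := by
    rw [derivative_plog _ constantCoeff_gser]
    calc (X * (d⁄dX ℚ gser * gser⁻¹)) * gser
        = (X * d⁄dX ℚ gser) * (gser⁻¹ * gser) := by ring
      _ = X * d⁄dX ℚ gser := by rw [hginv, mul_one]
      _ = PowerSeries.exp ℚ - gser := X_mul_derivative_gser
      _ = bernoulli'PowerSeries ℚ * gser - gser := by rw [bernoulli'_mul_gser]
      _ = (bernoulli'PowerSeries ℚ - 1) * gser := by ring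
  exact mul_right_cancel₀ gser_ne_zero key

lemma coeff_plog_gser_mul (k : ℕ) (hk : k ≠ 0) :
    PowerSeries.coeff k (plog gser) * k = bernoulli' k / (Nat.factorial k : ℚ) := by
  obtain ⟨j, hj⟩ : ∃ j, k = j + 1 := ⟨k - 1, by omega⟩
  have h := congrArg (PowerSeries.coeff k) X_mul_derivative_plog_gser
  rw [hj] at h ⊢
  rw [coeff_succ_X_mul, coeff_derivative, map_sub, bernoulli'PowerSeries, coeff_mk,
    coeff_one, if_neg (Nat.succ_ne_zero j)] at h
  simp only [Algebra.algebraMap_self_apply, sub_zero] at h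
  rw [show ((j : ℚ) + 1) = ((j + 1 : ℕ) : ℚ) by push_cast; ring] at h
  rw [h, div_eq_div_iff] <;> norm_num [Nat.factorial_ne_zero]

lemma constantCoeff_rescale (a : ℚ) (f : PowerSeries ℚ) :
    PowerSeries.constantCoeff (PowerSeries.rescale a f) = PowerSeries.constantCoeff f := by
  rw [← coeff_zero_eq_constantCoeff_apply, coeff_rescale, pow_zero, one_mul,
    coeff_zero_eq_constantCoeff_apply]

lemma shc_eq : shc = PowerSeries.rescale (-(1/2) : ℚ) (PowerSeries.exp ℚ) * gser := by
  have h5 : PowerSeries.rescale (-(1/2) : ℚ) (PowerSeries.exp ℚ) * PowerSeries.exp ℚ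
      = PowerSeries.rescale ((1:ℚ)/2) (PowerSeries.exp ℚ) := by
    have h := PowerSeries.exp_mul_exp_eq_exp_add (-(1/2) : ℚ) 1
    rw [rescale_one] at h
    norm_num at h
    convert h using 3 <;> norm_num
  apply mul_left_cancel₀ (PowerSeries.X_ne_zero : (X : PowerSeries ℚ) ≠ 0)
  have hrhs : (X : PowerSeries ℚ) * (PowerSeries.rescale (-(1/2) : ℚ) (PowerSeries.exp ℚ) * gser)
      = PowerSeries.rescale ((1:ℚ)/2) (PowerSeries.exp ℚ)
        - PowerSeries.rescale (-(1/2) : ℚ) (PowerSeries.exp ℚ) := by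
    calc (X : PowerSeries ℚ) * (PowerSeries.rescale (-(1/2) : ℚ) (PowerSeries.exp ℚ) * gser)
        = PowerSeries.rescale (-(1/2) : ℚ) (PowerSeries.exp ℚ) * (X * gser) := by ring
      _ = PowerSeries.rescale (-(1/2) : ℚ) (PowerSeries.exp ℚ) * (PowerSeries.exp ℚ - 1) := by
          rw [X_mul_gser]
      _ = _ := by rw [mul_sub, mul_one, h5]
  rw [hrhs]
  ext k
  cases k with
  | zero =>
    simp [coeff_zero_eq_constantCoeff_apply, constantCoeff_exp, constantCoeff_rescale]
  | succ n =>
    rw [coeff_succ_X_mul, shc, coeff_mk, map_sub, coeff_rescale, coeff_rescale, coeff_exp]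
    simp only [Algebra.algebraMap_self_apply]
    have hf : ((Nat.factorial (n + 1) : ℕ) : ℚ) ≠ 0 := by
      exact_mod_cast Nat.factorial_ne_zero (n + 1)
    have h2 : ((1:ℚ)/2) ^ (n+1) = ((2:ℚ) ^ (n+1))⁻¹ := by
      rw [one_div, inv_pow]
    rcases Nat.even_or_odd n with he | ho
    · have hodd : Odd (n + 1) := Even.add_one he
      rw [if_pos he, Odd.neg_pow hodd, h2]
      have h2n : ((2:ℚ) ^ n) ≠ 0 := by positivity
      field_simp
      ring
    · have heven : Even (n + 1) := Odd.add_one ho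
      rw [if_neg (Nat.not_even_iff_odd.mpr ho), Even.neg_pow heven, h2]
      ring

lemma bernoulli_two_mul_ne_zero (n : ℕ) (hn : n ≠ 0) : (bernoulli (2 * n) : ℚ) ≠ 0 := by
  intro h0
  have hs := hasSum_zeta_nat hn
  have hcast : ((bernoulli (2 * n) : ℚ) : ℝ) = 0 := by rw [h0]; norm_num
  rw [hcast] at hs
  simp only [mul_zero, zero_div] at hs
  have h1 := le_hasSum hs 1 (fun j _ => by positivity)
  norm_num at h1

lemma coeff_plog_shc_mul (n : ℕ) (hn : 1 ≤ n) :
    PowerSeries.coeff (2 * n) (plog shc) * (2 * n)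
      = bernoulli (2 * n) / (Nat.factorial (2 * n) : ℚ) := by
  have hre : PowerSeries.constantCoeff
      (PowerSeries.rescale (-(1/2) : ℚ) (PowerSeries.exp ℚ)) = 1 := by
    rw [constantCoeff_rescale, constantCoeff_exp]
  have hsplit : plog shc
      = plog (PowerSeries.rescale (-(1/2) : ℚ) (PowerSeries.exp ℚ)) + plog gser := by
    rw [shc_eq]
    exact plog_mul _ _ hre constantCoeff_gser
  have hres : PowerSeries.coeff (2 * n)
      (plog (PowerSeries.rescale (-(1/2) : ℚ) (PowerSeries.exp ℚ))) = 0 := by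
    rw [plog_rescale, plog_exp, coeff_rescale, coeff_X, if_neg (by omega : ¬ 2 * n = 1), mul_zero]
  rw [hsplit, map_add, hres, zero_add,
    bernoulli_eq_bernoulli'_of_ne_one (by omega : 2 * n ≠ 1)]
  have hg := coeff_plog_gser_mul (2 * n) (by omega : 2 * n ≠ 0)
  push_cast at hg ⊢
  linarith [hg]

lemma coeff_plog_shc_ne_zero (n : ℕ) (hn : 1 ≤ n) :
    PowerSeries.coeff (2 * n) (plog shc) ≠ 0 := by
  intro h0
  have h := coeff_plog_shc_mul n hn
  rw [h0, zero_mul] at h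
  have hb := bernoulli_two_mul_ne_zero n (by omega)
  have hf : ((Nat.factorial (2 * n) : ℕ) : ℚ) ≠ 0 := by
    exact_mod_cast Nat.factorial_ne_zero (2 * n)
  exact (div_ne_zero hb hf) h.symm

lemma int_pow_eq_one_iff (m : ℤ) (n : ℕ) (hn : 1 ≤ n) :
    ((m : ℚ) ^ (2 * n) = 1 ↔ m = 1 ∨ m = -1) := by
  constructor
  · intro h
    have hz : m ^ (2 * n) = 1 := by exact_mod_cast h
    have h2 := congrArg Int.natAbs hz
    rw [Int.natAbs_pow] at h2
    have h3 : m.natAbs = 1 := (pow_eq_one_iff.mp h2).resolve_right (by omega)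
    rcases Int.natAbs_eq_iff.mp h3 with h | h
    · left; exact_mod_cast h
    · right; exact_mod_cast h
  · rintro (rfl | rfl)
    · norm_num
    · push_cast
      exact Even.neg_one_pow ⟨n, by ring⟩

theorem log_torus_alexander_coeff_vanish_iff (m p : ℤ) (hm : m ≠ 0) (hp : p ≠ 0)
    (n : ℕ) (hn : 1 ≤ n) :
    (PowerSeries.coeff (2 * n) (plog (Aser m p)) = 0 ↔
      ((m : ℚ) ^ (2 * n) - 1) * ((p : ℚ) ^ (2 * n) - 1) = 0) ∧
    (PowerSeries.coeff (2 * n) (plog (Aser m p)) = 0 ↔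
      (m = 1 ∨ m = -1 ∨ p = 1 ∨ p = -1)) := by
  have hc1 : ∀ c : ℚ, PowerSeries.constantCoeff (PowerSeries.rescale c shc) = 1 := fun c => by
    rw [constantCoeff_rescale, constantCoeff_shc]
  have hprod : PowerSeries.constantCoeff
      (PowerSeries.rescale (m : ℚ) shc * PowerSeries.rescale (p : ℚ) shc) = 1 := by
    rw [map_mul, hc1, hc1, one_mul]
  have hsplit : plog (Aser m p)
      = PowerSeries.rescale ((m * p : ℤ) : ℚ) (plog shc) + plog shc
        - (PowerSeries.rescale (m : ℚ) (plog shc) + PowerSeries.rescale (p : ℚ) (plog shc)) := by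
    rw [Aser, plog_mul _ _ (by rw [map_mul, hc1, constantCoeff_shc, one_mul]) (by
        rw [PowerSeries.constantCoeff_inv, hprod, inv_one]),
      plog_mul _ _ (hc1 _) constantCoeff_shc, plog_inv _ hprod,
      plog_mul _ _ (hc1 _) (hc1 _), plog_rescale, plog_rescale, plog_rescale]
    ring
  set c : ℚ := PowerSeries.coeff (2 * n) (plog shc) with hc
  have hcoeff : PowerSeries.coeff (2 * n) (plog (Aser m p))
      = ((m : ℚ) ^ (2 * n) - 1) * ((p : ℚ) ^ (2 * n) - 1) * c := by
    rw [hsplit, map_sub, map_add, map_add, coeff_rescale, coeff_rescale, coeff_rescale, ← hc]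
    push_cast
    ring
  have hcne : c ≠ 0 := coeff_plog_shc_ne_zero n hn
  have h1 : (PowerSeries.coeff (2 * n) (plog (Aser m p)) = 0 ↔
      ((m : ℚ) ^ (2 * n) - 1) * ((p : ℚ) ^ (2 * n) - 1) = 0) := by
    rw [hcoeff, mul_eq_zero, or_iff_left hcne]
  refine ⟨h1, h1.trans ?_⟩
  rw [mul_eq_zero, sub_eq_zero, sub_eq_zero]
  rw [int_pow_eq_one_iff m n hn, int_pow_eq_one_iff p n hn]
  tauto
end
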